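/- arXiv:1803.01285 — 5 statements merged into one kernel-verified Lean document; each statement's English description precedes it below -/
import Mathlib

section
/- max( min_{x∈{0,1}} (φ + x)/max(φ + x, 1), min_{x∈{0,1}} 1/max(φ + x, 1) ) = φ, where φ = (√5 − 1)/2. -/
/-- The max-min optimization underlying the deterministic hardness example:
with φ = (√5 − 1)/2,
max( min_{x∈{0,1}} (φ + x)/max(φ + x, 1), min_{x∈{0,1}} 1/max(φ + x, 1) ) = φ. -/
theorem stmt0 :
    let φ : ℝ := (Real.sqrt 5 - 1) / 2
    max (min ((φ + 0) / max (φ + 0) 1) ((φ + 1) / max (φ + 1) 1))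
        (min (1 / max (φ + 0) 1) (1 / max (φ + 1) 1)) = φ := by
  intro φ
  have hs : Real.sqrt 5 ^ 2 = 5 := Real.sq_sqrt (by norm_num)
  have h2 : (2:ℝ) < Real.sqrt 5 := by nlinarith [Real.sqrt_nonneg 5]
  have h3 : Real.sqrt 5 < 3 := by nlinarith [Real.sqrt_nonneg 5]
  have hφ0 : 0 < φ := by simp only [φ]; linarith
  have hφ1 : φ < 1 := by simp only [φ]; linarith
  have hmul : φ * (φ + 1) = 1 := by simp only [φ]; nlinarith
  have hm1 : max (φ + 0) 1 = 1 := by rw [max_eq_right]; linarith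
  have hm2 : max (φ + 1) 1 = φ + 1 := by rw [max_eq_left]; linarith
  rw [hm1, hm2]
  have hne : φ + 1 ≠ 0 := by linarith
  have h1 : (φ + 1) / (φ + 1) = 1 := div_self hne
  have h4 : 1 / (φ + 1) = φ := by field_simp; linarith [hmul]
  rw [h1, h4]
  simp [min_eq_left hφ1.le, min_eq_left (le_of_lt hφ1)]
end

section
/- max_{p ∈ [0,1]} min_{x ∈ {0,1}} (p·(1/2 + x) + (1 − p)) / max(1/2 + x, 1) = 4/5. -/
/-- The randomized hardness optimization:
max_{p ∈ [0,1]} min_{x ∈ {0,1}} (p(1/2 + x) + (1 − p)) / max(1/2 + x, 1) = 4/5,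
the maximum being attained. -/
theorem stmt1 :
    IsGreatest
      {z : ℝ | ∃ p : ℝ, 0 ≤ p ∧ p ≤ 1 ∧
        z = min ((p * (1/2 + 0) + (1 - p)) / max (1/2 + 0) 1)
                ((p * (1/2 + 1) + (1 - p)) / max (1/2 + 1) 1)}
      (4/5) := by
  constructor
  · exact ⟨2/5, by norm_num⟩
  · rintro z ⟨p, hp0, hp1, rfl⟩
    have h1 : max ((1:ℝ)/2 + 0) 1 = 1 := by norm_num
    have h2 : max ((1:ℝ)/2 + 1) 1 = 3/2 := by norm_num
    rw [h1, h2]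
    rcases le_total p (2/5) with h | h
    · refine le_trans (min_le_right _ _) ?_
      rw [div_le_iff₀ (by norm_num)]
      linarith
    · refine le_trans (min_le_left _ _) ?_
      rw [div_le_iff₀ (by norm_num)]
      linarith
end

section
/- If d₁, d₂ are independent, identically distributed random variables taking values in the natural numbers whose common distribution has a non-decreasing hazard rate (i.e., P[d = k | d ≥ k] is non-decreasing in k), then for any integers i < j, P[i + d₁ ≤ j + d₂ | i + d₁ ≥ j] ≥ 1/2. -/
/-!
Write `S k = P[d ≥ k]`. Since the hazard rate is `1 - S (k + 1) / S k`, a non-decreasing hazard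
rate means that the ratio `S (k + 1) / S k` is non-increasing, and telescoping gives
`S (c + t) ≤ S c * S t`. With `c = j - i` the overlap event is `d₁ ≥ c`, and the earlier agent
leaves last exactly when `d₁ > d₂ + c`, which has probability
`∑ₘ P[d₂ = m] S (m + 1 + c) ≤ S c * P[d₁ > d₂] ≤ S c / 2`, the last step by exchangeability.
-/

open MeasureTheory Set

def HasMonotoneHazard (μ : Measure ℕ) : Prop :=
  ∀ k l : ℕ, k ≤ l → 0 < μ (Ici k) → 0 < μ (Ici l) → μ {k} / μ (Ici k) ≤ μ {l} / μ (Ici l)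

theorem measure_Ici_eq_add (μ : Measure ℕ) (k : ℕ) : μ (Ici k) = μ {k} + μ (Ici (k + 1)) := by
  rw [← measure_union (disjoint_singleton_left.2 (by simp)) measurableSet_Ici]
  congr 1
  ext n
  simp only [mem_Ici, mem_union, mem_singleton_iff]
  omega

theorem HasMonotoneHazard.measure_Ici_succ_mul_le {μ : Measure ℕ} [IsFiniteMeasure μ]
    (hμ : HasMonotoneHazard μ) {k l : ℕ} (hkl : k ≤ l) :
    μ (Ici (l + 1)) * μ (Ici k) ≤ μ (Ici (k + 1)) * μ (Ici l) := by
  rcases eq_or_ne (μ (Ici l)) 0 with hl | hl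
  · have : μ (Ici (l + 1)) = 0 := le_zero_iff.1 (hl ▸ measure_mono (Ici_subset_Ici.2 l.le_succ))
    simp [this]
  have hk : μ (Ici k) ≠ 0 := ne_bot_of_le_ne_bot hl (measure_mono (Ici_subset_Ici.2 hkl))
  have hcross : μ {k} * μ (Ici l) ≤ μ {l} * μ (Ici k) := calc
    μ {k} * μ (Ici l) = μ {k} / μ (Ici k) * (μ (Ici k) * μ (Ici l)) := by
      rw [← mul_assoc, ENNReal.div_mul_cancel hk (measure_ne_top _ _)]
    _ ≤ μ {l} / μ (Ici l) * (μ (Ici k) * μ (Ici l)) := by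
      gcongr ?_ * _
      exact hμ k l hkl (pos_iff_ne_zero.2 hk) (pos_iff_ne_zero.2 hl)
    _ = μ {l} * μ (Ici k) := by
      rw [mul_comm (μ (Ici k)), ← mul_assoc, ENNReal.div_mul_cancel hl (measure_ne_top _ _)]
  have hsplit : μ {l} * μ (Ici k) + μ (Ici (l + 1)) * μ (Ici k)
      = μ {k} * μ (Ici l) + μ (Ici (k + 1)) * μ (Ici l) := by
    rw [← add_mul, ← add_mul, ← measure_Ici_eq_add, ← measure_Ici_eq_add, mul_comm]
  have hfin : μ {l} * μ (Ici k) ≠ ⊤ := ENNReal.mul_ne_top (measure_ne_top _ _) (measure_ne_top _ _)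
  rw [← ENNReal.add_le_add_iff_left hfin, hsplit]
  gcongr

theorem HasMonotoneHazard.measure_Ici_add_le_mul {μ : Measure ℕ} [IsProbabilityMeasure μ]
    (hμ : HasMonotoneHazard μ) (c t : ℕ) : μ (Ici (c + t)) ≤ μ (Ici c) * μ (Ici t) := by
  induction t with
  | zero => simp
  | succ t ih =>
    rcases eq_or_ne (μ (Ici t)) 0 with ht | ht
    · have : μ (Ici (c + (t + 1))) = 0 :=
        le_zero_iff.1 (ht ▸ measure_mono (Ici_subset_Ici.2 (by omega)))
      simp [this]
    rw [← ENNReal.mul_le_mul_iff_left ht (measure_ne_top _ _)]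
    calc μ (Ici (c + t + 1)) * μ (Ici t) ≤ μ (Ici (t + 1)) * μ (Ici (c + t)) :=
          hμ.measure_Ici_succ_mul_le (by omega)
      _ ≤ μ (Ici (t + 1)) * (μ (Ici c) * μ (Ici t)) := by gcongr
      _ = μ (Ici c) * μ (Ici (t + 1)) * μ (Ici t) := by ring

theorem prod_self_measure_lt_le_half {α : Type*} [LinearOrder α] [MeasurableSpace α]
    [MeasurableSingletonClass α] [Countable α] (μ : Measure α) [IsProbabilityMeasure μ] :
    μ.prod μ {p | p.2 < p.1} ≤ 1 / 2 := by
  set A : Set (α × α) := {p | p.2 < p.1}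
  have hswap : μ.prod μ (Prod.swap ⁻¹' A) = μ.prod μ A := by
    rw [← Measure.map_apply measurable_swap .of_discrete, Measure.prod_swap]
  have hdisj : Disjoint A (Prod.swap ⁻¹' A) :=
    disjoint_left.2 fun p h h' => lt_asymm h h'
  have htwo : 2 * μ.prod μ A ≤ 1 := calc
    2 * μ.prod μ A = μ.prod μ (A ∪ Prod.swap ⁻¹' A) := by
      rw [measure_union hdisj .of_discrete, hswap, two_mul]
    _ ≤ 1 := prob_le_one
  rwa [ENNReal.le_div_iff_mul_le (by simp) (by simp), mul_comm]

theorem HasMonotoneHazard.prod_measure_add_lt_le {μ : Measure ℕ} [IsProbabilityMeasure μ]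
    (hμ : HasMonotoneHazard μ) (c : ℕ) :
    μ.prod μ {p | p.2 + c < p.1} ≤ μ (Ici c) * μ.prod μ {p | p.2 < p.1} := by
  rw [Measure.prod_apply_symm .of_discrete, Measure.prod_apply_symm .of_discrete,
    ← lintegral_const_mul' _ _ (measure_ne_top _ _)]
  refine lintegral_mono fun y => ?_
  have hbad : (fun x => (x, y)) ⁻¹' {p : ℕ × ℕ | p.2 + c < p.1} = Ici (c + (y + 1)) := by
    ext x
    simp only [mem_preimage, mem_ofPred_eq, mem_Ici]
    omega
  have hlt : (fun x => (x, y)) ⁻¹' {p : ℕ × ℕ | p.2 < p.1} = Ici (y + 1) := by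
    ext x
    simp only [mem_preimage, mem_ofPred_eq, mem_Ici]
    omega
  rw [hbad, hlt]
  exact hμ.measure_Ici_add_le_mul c (y + 1)

theorem HasMonotoneHazard.half_mul_measure_Ici_le {μ : Measure ℕ} [IsProbabilityMeasure μ]
    (hμ : HasMonotoneHazard μ) (c : ℕ) :
    1 / 2 * μ (Ici c) ≤ μ.prod μ {p | p.1 ≤ p.2 + c ∧ c ≤ p.1} := by
  have hset : {p : ℕ × ℕ | p.1 ≤ p.2 + c ∧ c ≤ p.1} = Ici c ×ˢ univ \ {p | p.2 + c < p.1} := by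
    ext p
    simp only [mem_ofPred_eq, mem_sdiff, mem_prod, mem_Ici, mem_univ, and_true]
    omega
  have hsub : {p : ℕ × ℕ | p.2 + c < p.1} ⊆ Ici c ×ˢ univ := fun p (hp : p.2 + c < p.1) =>
    ⟨show c ≤ p.1 by omega, trivial⟩
  have hbad : μ.prod μ {p | p.2 + c < p.1} ≤ μ (Ici c) * (1 / 2) :=
    (hμ.prod_measure_add_lt_le c).trans (by gcongr; exact prod_self_measure_lt_le_half μ)
  rw [hset, measure_sdiff hsub MeasurableSet.of_discrete.nullMeasurableSet (measure_ne_top _ _),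
    Measure.prod_prod, measure_univ, mul_one]
  refine ENNReal.le_sub_of_add_le_left (measure_ne_top _ _) ?_
  calc μ.prod μ {p | p.2 + c < p.1} + 1 / 2 * μ (Ici c)
      ≤ μ (Ici c) * (1 / 2) + 1 / 2 * μ (Ici c) := by gcongr
    _ = μ (Ici c) := by rw [mul_comm, ← add_mul, ENNReal.add_halves, one_mul]

/-- If d₁, d₂ are i.i.d. ℕ-valued with a non-decreasing hazard rate
(P[d = k | d ≥ k] non-decreasing in k), then for integers i < j,
P[i + d₁ ≤ j + d₂ ∧ i + d₁ ≥ j] ≥ (1/2) · P[i + d₁ ≥ j]. -/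
theorem stmt2 {Ω : Type*} [MeasurableSpace Ω] (ℙ : Measure Ω) [IsProbabilityMeasure ℙ]
    (d₁ d₂ : Ω → ℕ) (hm1 : Measurable d₁) (hm2 : Measurable d₂)
    (hindep : ProbabilityTheory.IndepFun d₁ d₂ ℙ)
    (hid : Measure.map d₁ ℙ = Measure.map d₂ ℙ)
    (hhaz : ∀ k l : ℕ, k ≤ l → 0 < ℙ (d₁ ⁻¹' Set.Ici k) → 0 < ℙ (d₁ ⁻¹' Set.Ici l) →
      ℙ (d₁ ⁻¹' {k}) / ℙ (d₁ ⁻¹' Set.Ici k) ≤ ℙ (d₁ ⁻¹' {l}) / ℙ (d₁ ⁻¹' Set.Ici l))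
    (i j : ℕ) (hij : i < j) :
    (1/2) * ℙ {ω | j ≤ i + d₁ ω} ≤ ℙ {ω | i + d₁ ω ≤ j + d₂ ω ∧ j ≤ i + d₁ ω} := by
  set μ := ℙ.map d₁
  have : IsProbabilityMeasure μ := Measure.isProbabilityMeasure_map hm1.aemeasurable
  have hlaw : ∀ s, μ s = ℙ (d₁ ⁻¹' s) := fun s => Measure.map_apply hm1 .of_discrete
  have hμ : HasMonotoneHazard μ := by simpa only [HasMonotoneHazard, hlaw] using hhaz
  have hjoint : ℙ.map (fun ω => (d₁ ω, d₂ ω)) = μ.prod μ := by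
    rw [(ProbabilityTheory.indepFun_iff_map_prod_eq_prod_map_map hm1.aemeasurable
      hm2.aemeasurable).1 hindep, ← hid]
  calc 1 / 2 * ℙ {ω | j ≤ i + d₁ ω} = 1 / 2 * μ (Ici (j - i)) := by
        rw [hlaw]
        congr 2
        ext ω
        simp only [mem_ofPred_eq, mem_preimage, mem_Ici]
        omega
    _ ≤ μ.prod μ {p | p.1 ≤ p.2 + (j - i) ∧ j - i ≤ p.1} := hμ.half_mul_measure_Ici_le (j - i)
    _ = ℙ {ω | i + d₁ ω ≤ j + d₂ ω ∧ j ≤ i + d₁ ω} := by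
        rw [← hjoint, Measure.map_apply (hm1.prodMk hm2) .of_discrete]
        congr 1
        ext ω
        simp only [mem_ofPred_eq, mem_preimage]
        omega
end

section
/- Let G be a finite graph on vertex set {1,…,T} with nonnegative edge weights v. Independently assign each vertex to be a 'seller' or a 'buyer' with probability 1/2 each, and keep edge {k,l} (with k < l) only if k is a seller and l is a buyer. Then the expected weight of a maximum-weight matching in the resulting random subgraph is at least 1/4 of the weight of a maximum-weight matching in G. -/
lemma count_aux {T : ℕ} (k l : Fin T) (h : k ≠ l) :
    4 * (Finset.univ.filter (fun σ : Fin T → Bool => σ k = true ∧ σ l = false)).card = 2 ^ T := by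
  classical
  have e : Bool × Bool × {σ : Fin T → Bool // σ k = true ∧ σ l = false} ≃ (Fin T → Bool) :=
    { toFun := fun x => Function.update (Function.update x.2.2.1 k x.1) l x.2.1
      invFun := fun τ => (τ k, τ l, ⟨Function.update (Function.update τ k true) l false, by
        refine ⟨?_, ?_⟩
        · rw [Function.update_of_ne h, Function.update_self]
        · rw [Function.update_self]⟩)
      left_inv := by
        rintro ⟨a, b, σ, h1, h2⟩
        simp only [Prod.mk.injEq, Subtype.mk.injEq]
        refine ⟨?_, ?_, ?_⟩
        · rw [Function.update_of_ne h, Function.update_self]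
        · rw [Function.update_self]
        · funext i
          by_cases hl : i = l
          · subst hl; simp [Function.update_of_ne h, h2]
          · by_cases hk : i = k
            · subst hk; simp [Function.update_of_ne hl, h1]
            · simp [Function.update_of_ne hl, Function.update_of_ne hk]
      right_inv := by
        intro τ
        funext i
        by_cases hl : i = l
        · subst hl; simp
        · by_cases hk : i = k
          · subst hk; simp [Function.update_of_ne h, Function.update_of_ne hl]
          · simp [Function.update_of_ne hl, Function.update_of_ne hk] }
  have h1 : Fintype.card (Fin T → Bool) = 2 ^ T := by simp
  have h2 : Fintype.card {σ : Fin T → Bool // σ k = true ∧ σ l = false} =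
      (Finset.univ.filter (fun σ : Fin T → Bool => σ k = true ∧ σ l = false)).card :=
    Fintype.card_subtype _
  have hc := Fintype.card_congr e
  rw [Fintype.card_prod, Fintype.card_prod, Fintype.card_bool, h1] at hc
  rw [← h2, ← hc]
  ring


/-- A set of ordered edges (smaller endpoint first) forms a matching:
all edges go from a smaller to a larger vertex and distinct edges share no endpoint. -/
def IsMatchingOn {T : ℕ} (M : Finset (Fin T × Fin T)) : Prop :=
  (∀ e ∈ M, e.1 < e.2) ∧
  ∀ e ∈ M, ∀ f ∈ M, e ≠ f →
    e.1 ≠ f.1 ∧ e.1 ≠ f.2 ∧ e.2 ≠ f.1 ∧ e.2 ≠ f.2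

/-- Assign each vertex independently to be a seller (`true`) or buyer (`false`)
with probability 1/2; keep edge (k,l), k < l, only if k is a seller and l a buyer.
The expected maximum matching weight of the surviving subgraph is at least 1/4
of the maximum matching weight of the original graph. -/
theorem stmt4 (T : ℕ) (v : Fin T × Fin T → ℝ) (hv : ∀ e, 0 ≤ v e)
    (E : Finset (Fin T × Fin T)) (hE : ∀ e ∈ E, e.1 < e.2) :
    (1/4 : ℝ) * sSup {w : ℝ | ∃ M ⊆ E, IsMatchingOn M ∧ w = ∑ e ∈ M, v e} ≤
      ∑ σ : Fin T → Bool, ((1:ℝ)/2^T) *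
        sSup {w : ℝ | ∃ M ⊆ E, IsMatchingOn M ∧
          (∀ e ∈ M, σ e.1 = true ∧ σ e.2 = false) ∧ w = ∑ e ∈ M, v e} := by
  classical
  set S : Set ℝ := {w : ℝ | ∃ M ⊆ E, IsMatchingOn M ∧ w = ∑ e ∈ M, v e} with hS
  have hSfin : S.Finite := by
    apply Set.Finite.subset (Set.Finite.image (fun M => ∑ e ∈ M, v e) E.powerset.finite_toSet)
    rintro w ⟨M, hM, _, rfl⟩
    exact ⟨M, by simpa using hM, rfl⟩
  have hSne : S.Nonempty := ⟨0, ∅, by simp, ⟨by simp, by simp [IsMatchingOn]⟩, by simp⟩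
  obtain ⟨M, hME, hMm, hMw⟩ := hSne.csSup_mem hSfin
  -- For each σ, lower bound the inner sSup
  have key : ∀ σ : Fin T → Bool,
      ∑ e ∈ M.filter (fun e => σ e.1 = true ∧ σ e.2 = false), v e ≤
      sSup {w : ℝ | ∃ M' ⊆ E, IsMatchingOn M' ∧
          (∀ e ∈ M', σ e.1 = true ∧ σ e.2 = false) ∧ w = ∑ e ∈ M', v e} := by
    intro σ
    apply le_csSup
    · apply Set.Finite.bddAbove
      apply Set.Finite.subset hSfin
      rintro w ⟨M', hM', hm', _, rfl⟩
      exact ⟨M', hM', hm', rfl⟩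
    · refine ⟨M.filter _, (Finset.filter_subset _ _).trans hME, ?_, ?_, rfl⟩
      · exact ⟨fun e he => hMm.1 e (Finset.mem_of_mem_filter e he),
          fun e he f hf hef => hMm.2 e (Finset.mem_of_mem_filter e he)
            f (Finset.mem_of_mem_filter f hf) hef⟩
      · intro e he
        exact (Finset.mem_filter.mp he).2
  calc (1/4 : ℝ) * sSup S = ∑ e ∈ M, (1/4 : ℝ) * v e := by
        rw [hMw, Finset.mul_sum]
    _ = ∑ σ : Fin T → Bool, ((1:ℝ)/2^T) *
          ∑ e ∈ M.filter (fun e => σ e.1 = true ∧ σ e.2 = false), v e := by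
        simp only [Finset.sum_filter, Finset.mul_sum]
        rw [Finset.sum_comm]
        refine Finset.sum_congr rfl fun e he => ?_
        have hne : e.1 ≠ e.2 := ne_of_lt (hMm.1 e he)
        have hcount := count_aux e.1 e.2 hne
        have hsw : ∀ x : Fin T → Bool,
            ((1:ℝ)/2^T) * (if x e.1 = true ∧ x e.2 = false then v e else 0) =
            if x e.1 = true ∧ x e.2 = false then ((1:ℝ)/2^T) * v e else 0 := by
          intro x; split_ifs <;> simp
        rw [Finset.sum_congr rfl (fun x _ => hsw x), ← Finset.sum_filter]
        have : ∑ σ ∈ Finset.univ.filter (fun σ : Fin T → Bool => σ e.1 = true ∧ σ e.2 = false),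
            ((1:ℝ)/2^T) * v e =
            ((Finset.univ.filter (fun σ : Fin T → Bool => σ e.1 = true ∧ σ e.2 = false)).card : ℝ)
              * (((1:ℝ)/2^T) * v e) := by
          rw [Finset.sum_const, nsmul_eq_mul]
        rw [this]
        have h2T : (2:ℝ)^T ≠ 0 := by positivity
        have hcR : ((Finset.univ.filter (fun σ : Fin T → Bool =>
            σ e.1 = true ∧ σ e.2 = false)).card : ℝ) = 2^T / 4 := by
          have := congrArg (Nat.cast : ℕ → ℝ) hcount
          push_cast at this
          linarith
        rw [hcR]
        field_simp
    _ ≤ _ := by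
        refine Finset.sum_le_sum fun σ _ => ?_
        exact mul_le_mul_of_nonneg_left (key σ) (by positivity)
end

section
/- Let T ≥ 2 and M ≥ T. Suppose nonnegative reals x₂,…,x_T satisfy ∑_{k=2}^T x_k ≤ 1. Then there exists an index K ∈ {2,…,T} with x_K ≤ 1/(T−1), and for this K, ∑_{j=2}^{K} x_j M^j ≤ x_K M^K + M^{K−1}·(M/(M−1)) ≤ (2/(T−1) + 2/M)·M^K; in particular ∑_{j≤K} x_j M^j ≤ (x_K + 2/M)·M^K + M^K/(T−1) and hence the ratio (∑_{j≤K} x_j M^j)/M^K tends to 0 as T, M → ∞. -/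
/-- Pigeonhole/geometric-series bound behind the adversarial-departure hardness:
if T ≥ 2, M ≥ T and nonnegative x₂,…,x_T sum to at most 1, then some K ∈ {2,…,T}
has x_K ≤ 1/(T−1), and ∑_{j=2}^K x_j M^j ≤ x_K M^K + M^{K−1}·(M/(M−1))
≤ (2/(T−1) + 2/M)·M^K; in particular
∑_{j=2}^K x_j M^j ≤ (x_K + 2/M)·M^K + M^K/(T−1). -/
theorem stmt9 (T : ℕ) (hT : 2 ≤ T) (M : ℝ) (hM : (T : ℝ) ≤ M)
    (x : ℕ → ℝ) (hx : ∀ k, 0 ≤ x k) (hsum : ∑ k ∈ Finset.Icc 2 T, x k ≤ 1) :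
    ∃ K, 2 ≤ K ∧ K ≤ T ∧ x K ≤ 1 / ((T : ℝ) - 1) ∧
      (∑ j ∈ Finset.Icc 2 K, x j * M ^ j ≤ x K * M ^ K + M ^ (K - 1) * (M / (M - 1))) ∧
      (x K * M ^ K + M ^ (K - 1) * (M / (M - 1)) ≤ (2 / ((T : ℝ) - 1) + 2 / M) * M ^ K) ∧
      (∑ j ∈ Finset.Icc 2 K, x j * M ^ j ≤ (x K + 2 / M) * M ^ K + M ^ K / ((T : ℝ) - 1)) := by
  have hT2 : (2:ℝ) ≤ (T:ℝ) := by exact_mod_cast hT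
  have hT1 : (1:ℝ) ≤ (T:ℝ) - 1 := by linarith
  have hT1pos : (0:ℝ) < (T:ℝ) - 1 := by linarith
  have hM2 : (2:ℝ) ≤ M := le_trans hT2 hM
  have hM1 : (1:ℝ) ≤ M := by linarith
  have hMpos : (0:ℝ) < M := by linarith
  have hM1pos : (0:ℝ) < M - 1 := by linarith
  -- pigeonhole
  obtain ⟨K, hKmem, hKle⟩ : ∃ K ∈ Finset.Icc 2 T, x K ≤ 1 / ((T:ℝ) - 1) := by
    by_contra h
    push_neg at h
    have hne : (Finset.Icc 2 T).Nonempty := by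
      rw [Finset.nonempty_Icc]; omega
    have h1 : ∑ _k ∈ Finset.Icc 2 T, (1/((T:ℝ)-1)) < ∑ k ∈ Finset.Icc 2 T, x k :=
      Finset.sum_lt_sum_of_nonempty hne (fun k hk => h k hk)
    have hcard : (Finset.Icc 2 T).card = T - 1 := by
      rw [Nat.card_Icc]; omega
    rw [Finset.sum_const, hcard, nsmul_eq_mul] at h1
    have hcast : ((T - 1 : ℕ) : ℝ) = (T:ℝ) - 1 := by
      have h1T : 1 ≤ T := by omega
      push_cast [h1T]
      ring
    rw [hcast, mul_one_div, div_self (ne_of_gt hT1pos)] at h1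
    linarith
  rw [Finset.mem_Icc] at hKmem
  obtain ⟨hK2, hKT⟩ := hKmem
  have hKeq : K - 1 + 1 = K := by omega
  -- split the sum
  have hsplit : ∑ j ∈ Finset.Icc 2 K, x j * M ^ j
      = (∑ j ∈ Finset.Icc 2 (K-1), x j * M ^ j) + x K * M ^ K := by
    have := Finset.sum_Icc_succ_top (a := 2) (b := K - 1)
      (f := fun j => x j * M ^ j) (by omega)
    rw [hKeq] at this
    exact this
  -- geometric bound on the prefix
  have hpow : ∀ j ∈ Finset.Icc 2 (K-1), x j * M ^ j ≤ x j * M ^ (K-1) := by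
    intro j hj
    rw [Finset.mem_Icc] at hj
    exact mul_le_mul_of_nonneg_left (pow_le_pow_right₀ hM1 hj.2) (hx j)
  have hsub : ∑ j ∈ Finset.Icc 2 (K-1), x j ≤ 1 := by
    refine le_trans (Finset.sum_le_sum_of_subset_of_nonneg
      (Finset.Icc_subset_Icc_right (by omega)) (fun i _ _ => hx i)) hsum
  have hprefix : ∑ j ∈ Finset.Icc 2 (K-1), x j * M ^ j ≤ M ^ (K-1) := by
    calc ∑ j ∈ Finset.Icc 2 (K-1), x j * M ^ j
        ≤ ∑ j ∈ Finset.Icc 2 (K-1), x j * M ^ (K-1) := Finset.sum_le_sum hpow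
      _ = (∑ j ∈ Finset.Icc 2 (K-1), x j) * M ^ (K-1) := by rw [Finset.sum_mul]
      _ ≤ 1 * M ^ (K-1) := by
          exact mul_le_mul_of_nonneg_right hsub (pow_nonneg (le_of_lt hMpos) _)
      _ = M ^ (K-1) := one_mul _
  have hpK : M ^ (K-1) * M = M ^ K := by
    rw [← pow_succ, hKeq]
  have hpK1pos : (0:ℝ) < M ^ (K-1) := pow_pos hMpos _
  have hpKpos : (0:ℝ) < M ^ K := pow_pos hMpos _
  have hratio : (1:ℝ) ≤ M / (M - 1) := by
    rw [le_div_iff₀ hM1pos]; linarith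
  have hratio2 : M / (M - 1) ≤ 2 := by
    rw [div_le_iff₀ hM1pos]; linarith
  refine ⟨K, hK2, hKT, hKle, ?_, ?_, ?_⟩
  · rw [hsplit]
    have : M ^ (K-1) ≤ M ^ (K-1) * (M / (M-1)) := by
      nlinarith
    linarith
  · have h1 : x K * M ^ K ≤ (2 / ((T:ℝ)-1)) * M ^ K := by
      have : x K ≤ 2 / ((T:ℝ)-1) := by
        refine hKle.trans ?_
        rw [div_le_div_iff₀ hT1pos hT1pos]; linarith
      exact mul_le_mul_of_nonneg_right this (le_of_lt hpKpos)
    have h2 : M ^ (K-1) * (M / (M-1)) ≤ (2 / M) * M ^ K := by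
      have : (2 / M) * M ^ K = 2 * M ^ (K-1) := by
        rw [← hpK]; field_simp
      rw [this]
      nlinarith
    linarith [h1, h2]
  · rw [hsplit]
    have h2 : M ^ (K-1) ≤ (2 / M) * M ^ K := by
      have : (2 / M) * M ^ K = 2 * M ^ (K-1) := by
        rw [← hpK]; field_simp
      rw [this]; linarith
    have h3 : (0:ℝ) ≤ M ^ K / ((T:ℝ)-1) := by positivity
    nlinarith [hprefix]
end
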